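/- arXiv:0712.2344 — 2 statements merged into one kernel-verified Lean document; each statement's English description precedes it below -/
import Mathlib

section
/- Let h : P^1 → P^1 be a nonconstant morphism over a field K of characteristic 0, let H = (h,h) act coordinatewise on P^1 × P^1, let Δ be the diagonal divisor, and let Δ_H = H*(Δ). Then for any point (P,Q) ∈ P^1(K) × P^1(K) the multiplicity of Δ_H at (P,Q) is at most max over x ∈ P^1 of the ramification index e(x/h(x)); moreover, every irreducible component of Δ_H has multiplicity one. -/
open Polynomial

/-!
Translating `(P, Q)` to the origin, the coefficient of `X₀ⁿ` in `h(X₀ + P) - h(X₁ + Q)` is the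
`n`-th Taylor coefficient of `h - h(Q)` at `P`. It is nonzero for `n` the order of vanishing of
`h - h(Q)` at `P`, which is `e(P / h(P))` if `h(P) = h(Q)` and `0` otherwise.

If `a²` divides `F = h(X₀) - h(X₁)`, then `a` divides both partial derivatives `h'(X₀)` and
`-h'(X₁)`, which are nonzero in characteristic `0`. A divisor of a nonzero polynomial in `X₀`
alone and of one in `X₁` alone involves no variable, so `a` is a unit.
-/

/-- The ramification index `e(x / h(x))` of the morphism induced by `h` at the point `x`. -/
noncomputable def ramIdx {K : Type*} [CommRing K] (h : Polynomial K) (x : K) : ℕ :=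
  (h - C (h.eval x)).rootMultiplicity x

/-- The multiplicity (order of vanishing) of the plane curve/divisor defined by the
bivariate polynomial `F` at the point `(P, Q)`: the smallest total degree of a monomial
appearing in `F(X₀ + P, X₁ + Q)` (and `⊤` when `F = 0`). -/
noncomputable def multAt {K : Type*} [CommRing K] (F : MvPolynomial (Fin 2) K) (P Q : K) :
    ℕ∞ :=
  ((MvPolynomial.bind₁
      (fun i : Fin 2 => MvPolynomial.X i + MvPolynomial.C (if i = 0 then P else Q)) F).support).inf
    fun m => ((m.sum fun _ e => e : ℕ) : ℕ∞)

theorem Derivation.dvd_apply_of_mul_self_dvd {R A : Type*} [CommSemiring R] [CommSemiring A]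
    [Algebra R A] (D : Derivation R A A) {a x : A} (h : a * a ∣ x) : a ∣ D x := by
  obtain ⟨b, rfl⟩ := h
  simp only [Derivation.leibniz, smul_eq_mul]
  exact ⟨a * D b + 2 * b * D a, by ring⟩

namespace MvPolynomial

section CommSemiring

variable {R σ : Type*} [CommSemiring R]

theorem bind₁_aeval_X (f : σ → MvPolynomial σ R) (i : σ) (p : R[X]) :
    bind₁ f (Polynomial.aeval (X i) p) = Polynomial.aeval (f i) p := by
  rw [← Polynomial.aeval_algHom_apply, bind₁_X_right]

theorem aeval_X_add_C (i : σ) (r : R) (p : R[X]) :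
    Polynomial.aeval (X i + C r) p = Polynomial.aeval (X i : MvPolynomial σ R) (taylor r p) := by
  simp [taylor_apply, aeval_comp, algebraMap_eq]

theorem aeval_X_ne_zero (i : σ) {p : R[X]} (hp : p ≠ 0) :
    Polynomial.aeval (X i : MvPolynomial σ R) p ≠ 0 :=
  (map_ne_zero_iff _ (Polynomial.toMvPolynomial_injective i)).2 hp

theorem vars_aeval_X_subset (i : σ) (p : R[X]) :
    (Polynomial.aeval (X i : MvPolynomial σ R) p).vars ⊆ {i} := by
  have hmem : Polynomial.aeval (X i : MvPolynomial σ R) p ∈ supported R {i} := by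
    rw [supported_eq_adjoin_X, Set.image_singleton]
    exact Polynomial.aeval_mem_adjoin_singleton R _
  rw [← Finset.coe_subset, Finset.coe_singleton]
  exact mem_supported.1 hmem

variable [DecidableEq σ]

theorem coeff_single_aeval_X (i : σ) (p : R[X]) (n : ℕ) :
    coeff (Finsupp.single i n) (Polynomial.aeval (X i) p) = p.coeff n := by
  induction p using Polynomial.induction_on' with
  | add f g hf hg => simp [hf, hg]
  | monomial k a =>
    simp [coeff_C_mul, X_pow_eq_monomial, coeff_monomial,
      Polynomial.coeff_monomial, algebraMap_eq, (Finsupp.single_injective i).eq_iff]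

theorem coeff_single_aeval_X_of_ne {i j : σ} (hij : i ≠ j) (p : R[X]) (n : ℕ) :
    coeff (Finsupp.single i n) (Polynomial.aeval (X j) p) = if n = 0 then p.coeff 0 else 0 := by
  induction p using Polynomial.induction_on' with
  | add f g hf hg => split_ifs <;> simp_all
  | monomial k a =>
    have hsingle : Finsupp.single j k = Finsupp.single i n ↔ k = 0 ∧ n = 0 := by
      simp [Finsupp.single_eq_single_iff, hij.symm]
    by_cases hn : n = 0 <;>
      simp [coeff_C_mul, X_pow_eq_monomial, coeff_monomial,
        Polynomial.coeff_monomial, algebraMap_eq, hsingle, hn]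

end CommSemiring

section Domain

variable {R σ : Type*} [CommRing R] [IsDomain R]

theorem vars_subset_of_dvd {a q : MvPolynomial σ R} (h : a ∣ q) (hq : q ≠ 0) :
    a.vars ⊆ q.vars := by
  classical
  obtain ⟨b, rfl⟩ := h
  rw [vars_def, vars_def, degrees_mul_eq (left_ne_zero_of_mul hq) (right_ne_zero_of_mul hq),
    Multiset.toFinset_add]
  exact Finset.subset_union_left

end Domain

variable {K σ : Type*} [Field K]

theorem isUnit_of_dvd_aeval_X_of_dvd_aeval_X {i j : σ} (hij : i ≠ j) {p q : K[X]}
    (hp : p ≠ 0) (hq : q ≠ 0) {a : MvPolynomial σ K} (hai : a ∣ Polynomial.aeval (X i) p)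
    (haj : a ∣ Polynomial.aeval (X j) q) : IsUnit a := by
  classical
  have hvars : a.vars = ∅ := by
    have hi := (vars_subset_of_dvd hai (aeval_X_ne_zero i hp)).trans (vars_aeval_X_subset i p)
    have hj := (vars_subset_of_dvd haj (aeval_X_ne_zero j hq)).trans (vars_aeval_X_subset j q)
    simpa [Finset.subset_singleton_iff, hij] using Finset.subset_inter hi hj
  have ha : a ≠ 0 := ne_zero_of_dvd_ne_zero (aeval_X_ne_zero i hp) hai
  rw [vars_eq_empty_iff_eq_C] at hvars
  rw [hvars] at ha ⊢
  exact (isUnit_iff_ne_zero.2 (by simpa using ha)).map C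

theorem squarefree_aeval_X_sub_aeval_X [DecidableEq σ] {i j : σ} (hij : i ≠ j) {p : K[X]}
    (hp : derivative p ≠ 0) :
    Squarefree (Polynomial.aeval (X i : MvPolynomial σ K) p - Polynomial.aeval (X j) p) := by
  intro a ha
  have hi := (pderiv (R := K) i).dvd_apply_of_mul_self_dvd ha
  have hj := (pderiv (R := K) j).dvd_apply_of_mul_self_dvd ha
  simp only [map_sub, Derivation.map_aeval, pderiv_X_self, pderiv_X_of_ne hij,
    pderiv_X_of_ne hij.symm, smul_eq_mul, mul_one, mul_zero, sub_zero, zero_sub, dvd_neg] at hi hj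
  exact isUnit_of_dvd_aeval_X_of_dvd_aeval_X hij hp hp hi hj

end MvPolynomial

section Multiplicity

variable {K : Type*} [Field K]

theorem ramIdx_le_natDegree (h : K[X]) (x : K) : ramIdx h x ≤ h.natDegree := by
  classical
  rw [ramIdx, ← count_roots, ← natDegree_sub_C (a := h.eval x)]
  exact (Multiset.count_le_card _ _).trans (card_roots' _)

theorem rootMultiplicity_sub_C_eval_le_ramIdx (h : K[X]) (P Q : K) :
    (h - C (h.eval Q)).rootMultiplicity P ≤ ramIdx h P := by
  by_cases hPQ : h.eval P = h.eval Q
  · rw [ramIdx, hPQ]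
  · rw [rootMultiplicity_eq_zero (by simpa [sub_eq_zero] using hPQ)]
    exact Nat.zero_le _

theorem multAt_le_of_coeff_single_ne_zero {F : MvPolynomial (Fin 2) K} {P Q : K} {i : Fin 2}
    {n : ℕ} (hn : (MvPolynomial.bind₁ (fun i : Fin 2 => MvPolynomial.X i +
      MvPolynomial.C (if i = 0 then P else Q)) F).coeff (Finsupp.single i n) ≠ 0) :
    multAt F P Q ≤ n :=
  (Finset.inf_le (MvPolynomial.mem_support_iff.2 hn)).trans (by simp)

theorem coeff_single_zero_bind₁_shift_sub_aeval (h : K[X]) (P Q : K) (n : ℕ) :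
    (MvPolynomial.bind₁ (fun i : Fin 2 => MvPolynomial.X i +
      MvPolynomial.C (if i = 0 then P else Q))
        (aeval (MvPolynomial.X 0) h - aeval (MvPolynomial.X 1) h)).coeff (Finsupp.single 0 n) =
      (taylor P (h - C (h.eval Q))).coeff n := by
  rw [map_sub, MvPolynomial.bind₁_aeval_X, MvPolynomial.bind₁_aeval_X]
  simp only [Fin.isValue, ↓reduceIte, one_ne_zero]
  rw [MvPolynomial.aeval_X_add_C, MvPolynomial.aeval_X_add_C, MvPolynomial.coeff_sub,
    MvPolynomial.coeff_single_aeval_X, MvPolynomial.coeff_single_aeval_X_of_ne (by decide),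
    map_sub, taylor_C, coeff_sub, coeff_C, taylor_coeff_zero]

theorem multAt_sub_aeval_le_ramIdx {h : K[X]} (hdeg : 0 < h.natDegree) (P Q : K) :
    multAt (aeval (MvPolynomial.X 0) h - aeval (MvPolynomial.X 1) h) P Q ≤ ramIdx h P := by
  have hne : h - C (h.eval Q) ≠ 0 :=
    ne_zero_of_natDegree_gt (n := 0) (by rwa [natDegree_sub_C])
  refine (multAt_le_of_coeff_single_ne_zero (i := 0) ?_).trans
    (by exact_mod_cast rootMultiplicity_sub_C_eval_le_ramIdx h P Q)
  rw [coeff_single_zero_bind₁_shift_sub_aeval, rootMultiplicity_eq_natTrailingDegree,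
    ← taylor_apply]
  exact trailingCoeff_nonzero_iff_nonzero.2 (mt (taylor_eq_zero P _).1 hne)

end Multiplicity

/-- Let `h` be a nonconstant morphism (in an affine chart, a nonconstant polynomial) over a
field of characteristic `0`, let `H = (h, h)` act on `ℙ¹ × ℙ¹`, and let
`Δ_H = H^*(Δ)` be the pullback of the diagonal, cut out by `h(x) - h(y) = 0`.  Then the
multiplicity of `Δ_H` at any point `(P, Q)` is at most `max_x e(x / h(x))`, and every
irreducible component of `Δ_H` occurs with multiplicity one (the defining equation is
squarefree). -/
theorem stmt5 {K : Type*} [Field K] [CharZero K] (h : Polynomial K)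
    (hdeg : 0 < h.natDegree)
    (F : MvPolynomial (Fin 2) K)
    (hFdef : F = Polynomial.aeval (MvPolynomial.X 0) h - Polynomial.aeval (MvPolynomial.X 1) h) :
    (∀ P Q : K, multAt F P Q ≤ ((⨆ x : K, ramIdx h x : ℕ) : ℕ∞)) ∧ Squarefree F := by
  subst hFdef
  have hbdd : BddAbove (Set.range (ramIdx h)) :=
    ⟨h.natDegree, Set.forall_mem_range.2 (ramIdx_le_natDegree h)⟩
  refine ⟨fun P Q => (multAt_sub_aeval_le_ramIdx hdeg P Q).trans ?_,
    MvPolynomial.squarefree_aeval_X_sub_aeval_X (by decide) ?_⟩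
  · exact_mod_cast le_ciSup hbdd P
  · exact fun h' => hdeg.ne' (derivative_eq_zero.1 h')
end

section
/- Let p be an odd prime such that 2 is not a quadratic residue modulo p, let f(t) = t^2 − 1, and let x ∈ Q be a p-adic unit such that f(x) is also a p-adic unit. Then for every n ≥ 1, f^n(x) is a p-adic unit; in particular f^n(x) ≢ 0 (mod p) for all n ≥ 0. -/
lemma key_step (p : ℕ) [Fact p.Prime] (h2 : ¬ IsSquare (2 : ZMod p))
    (z : ℚ_[p]) (hz : ‖z‖ = 1) (hy : ‖z ^ 2 - 1‖ = 1) :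
    ‖(z ^ 2 - 1) ^ 2 - 1‖ = 1 := by
  have hfac : (z ^ 2 - 1) ^ 2 - 1 = z ^ 2 * (z ^ 2 - 2) := by ring
  have hz2 : ‖z ^ 2‖ = 1 := by rw [norm_pow, hz, one_pow]
  rw [hfac, norm_mul, hz2, one_mul]
  -- show ‖z^2 - 2‖ = 1
  have hzle : ‖z‖ ≤ 1 := le_of_eq hz
  set Z : ℤ_[p] := ⟨z, hzle⟩ with hZ
  have hcoe : ((Z ^ 2 - 2 : ℤ_[p]) : ℚ_[p]) = z ^ 2 - 2 := by push_cast; rfl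
  have hle : ‖z ^ 2 - 2‖ ≤ 1 := by
    rw [← hcoe, PadicInt.padic_norm_e_of_padicInt]
    exact PadicInt.norm_le_one _
  rcases lt_or_eq_of_le hle with hlt | heq
  · exfalso
    have hmem : Z ^ 2 - 2 ∈ IsLocalRing.maximalIdeal ℤ_[p] := by
      rw [IsLocalRing.mem_maximalIdeal, PadicInt.mem_nonunits, PadicInt.norm_def, hcoe]
      exact hlt
    rw [← PadicInt.ker_toZMod, RingHom.mem_ker, map_sub, map_pow, map_ofNat] at hmem
    exact h2 ⟨PadicInt.toZMod Z, by rw [← sq]; exact (sub_eq_zero.mp hmem).symm⟩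
  · exact heq

/-- Let `p` be an odd prime such that `2` is not a quadratic residue modulo `p`, let
`f(t) = t² - 1`, and let `x ∈ ℚ` be a `p`-adic unit such that `f(x)` is also a `p`-adic
unit.  Then every iterate `fⁿ(x)` is a `p`-adic unit; in particular `fⁿ(x) ≢ 0 (mod p)`
for all `n ≥ 0`. -/
theorem stmt9 (p : ℕ) [Fact p.Prime] (hodd : p ≠ 2)
    (h2 : ¬ IsSquare (2 : ZMod p)) (f : ℚ → ℚ) (hf : f = fun t => t ^ 2 - 1) (x : ℚ)
    (hx : ‖(x : ℚ_[p])‖ = 1) (hfx : ‖((f x : ℚ) : ℚ_[p])‖ = 1) :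
    ∀ n : ℕ, ‖((f^[n] x : ℚ) : ℚ_[p])‖ = 1 := by
  intro n
  induction n using Nat.strong_induction_on with
  | _ n ih =>
    match n with
    | 0 => simpa using hx
    | 1 => simpa using hfx
    | (m + 2) =>
      have h0 := ih m (by omega)
      have h1 := ih (m + 1) (by omega)
      have e1 : f^[m + 1] x = (f^[m] x) ^ 2 - 1 := by
        rw [Function.iterate_succ_apply', hf]
      have e2 : f^[m + 2] x = ((f^[m] x) ^ 2 - 1) ^ 2 - 1 := by
        rw [Function.iterate_succ_apply', e1, hf]
      rw [e1] at h1
      rw [e2]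
      push_cast at h1 ⊢
      exact key_step p h2 _ h0 h1
end
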